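/- For every σ ∈ S_n, Σ_{w ∈ R(σ)} d_C^{G(σ)}(w) = Σ_{i ∈ Des(σ)} Σ_{u ∈ R(σ·s_i)} d_C^{G(σ·s_i)}(u) + 2·Σ_{{i,j} ⊆ Des(σ), j−i>1} |R(σ·s_i·s_j)|, where on the right-hand side d_C^{G(σ·s_i)}(u) is the commutation degree of u computed in the graph G(σ·s_i), and the last sum ranges over unordered pairs of descents of σ that differ by more than 1. -/

import Mathlib

namespace RW

/-- The simple transposition `s i = (i, i+1)`, acting on `ℕ` (points are `1, …, n`;
the point `0` is unused, matching the paper's 1-indexed conventions). -/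
def s (i : ℕ) : Equiv.Perm ℕ := Equiv.swap i (i + 1)

/-- The product `s i₁ * s i₂ * ⋯ * s iₗ` of the word `w = [i₁, …, iₗ]`. -/
def π (w : List ℕ) : Equiv.Perm ℕ := (w.map s).prod

/-- The copy of the symmetric group `S_n` inside `Equiv.Perm ℕ`: permutations of
`{1, …, n}`, i.e. fixing `0` and every point `> n`. -/
def Sn (n : ℕ) : Set (Equiv.Perm ℕ) := {σ | ∀ m : ℕ, (m = 0 ∨ n < m) → σ m = m}

/-- The length `ℓ(σ)`: the number of inversions of `σ`. -/
noncomputable def len (σ : Equiv.Perm ℕ) : ℕ :=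
  Nat.card {p : ℕ × ℕ // p.1 < p.2 ∧ σ p.2 < σ p.1}

/-- `w` is a reduced word for `σ`: its product is `σ` and its length is `ℓ(σ)`. -/
def Reduced (σ : Equiv.Perm ℕ) (w : List ℕ) : Prop :=
  π w = σ ∧ w.length = len σ

/-- `R σ`: the set of reduced words of `σ`. -/
def R (σ : Equiv.Perm ℕ) : Set (List ℕ) := {w | Reduced σ w}

/-- The descent set `Des σ = {i ≥ 1 | σ(i) > σ(i+1)}`. -/
def Des (σ : Equiv.Perm ℕ) : Set ℕ := {i | 1 ≤ i ∧ σ (i + 1) < σ i}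

/-- A single commutation move: swap two adjacent letters `a, b` with `|a - b| > 1`. -/
def CommMove (w w' : List ℕ) : Prop :=
  ∃ u v : List ℕ, ∃ a b : ℕ, 1 < ((a : ℤ) - (b : ℤ)).natAbs ∧
    w = u ++ a :: b :: v ∧ w' = u ++ b :: a :: v

/-- A single braid move: replace consecutive letters `(a, a+1, a)` by `(a+1, a, a+1)`
or vice versa. -/
def BraidMove (w w' : List ℕ) : Prop :=
  ∃ u v : List ℕ, ∃ a : ℕ,
    (w = u ++ a :: (a+1) :: a :: v ∧ w' = u ++ (a+1) :: a :: (a+1) :: v) ∨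
    (w = u ++ (a+1) :: a :: (a+1) :: v ∧ w' = u ++ a :: (a+1) :: a :: v)

/-- The braid degree of a word: the number of words obtainable from it by a single
braid move.  (For `w ∈ R σ` these are exactly the braid-edge neighbours of `w` in
`G(σ)`, since a braid move sends reduced words of `σ` to reduced words of `σ`.) -/
noncomputable def dB (w : List ℕ) : ℕ := Nat.card {w' : List ℕ // BraidMove w w'}

/-- The commutation degree of a word: the number of words obtainable from it by a
single commutation move. -/
noncomputable def dC (w : List ℕ) : ℕ := Nat.card {w' : List ℕ // CommMove w w'}

/-- The number `|B(σ)|` of braid classes: classes of `R σ` under the equivalence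
generated by single braid moves. -/
noncomputable def nB (σ : Equiv.Perm ℕ) : ℕ :=
  Nat.card (Quot (fun w w' : R σ => BraidMove w.1 w'.1))

/-- The number `|C(σ)|` of commutation classes. -/
noncomputable def nC (σ : Equiv.Perm ℕ) : ℕ :=
  Nat.card (Quot (fun w w' : R σ => CommMove w.1 w'.1))

/-- The underlying function of `w₀^{(k,i)}`: reverse the interval `{i, …, i+k-1}`. -/
def w0fun (k i : ℕ) : ℕ → ℕ := fun m => if i ≤ m ∧ m < i + k then i + (i + k - 1) - m else m

theorem w0fun_involutive (k i : ℕ) : Function.Involutive (w0fun k i) := by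
  intro m
  unfold w0fun
  split_ifs <;> omega

/-- `w₀^{(k,i)}`: the permutation fixing every point outside `{i, …, i+k-1}` and
reversing that interval. -/
def w0 (k i : ℕ) : Equiv.Perm ℕ := (w0fun_involutive k i).toPerm

/-- Right weak order: `τ ≤ σ` iff `ℓ(τ) + ℓ(τ⁻¹σ) = ℓ(σ)`. -/
def wle (τ σ : Equiv.Perm ℕ) : Prop := len τ + len (τ⁻¹ * σ) = len σ

/-- The support of `σ`: the letters appearing in some reduced word of `σ`. -/
def supp (σ : Equiv.Perm ℕ) : Set ℕ := {a | ∃ w, Reduced σ w ∧ a ∈ w}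

/-!
Peel off the last letter: the reduced words of `σ ≠ 1` are exactly the words `u ++ [i]` with
`i` a descent of `σ` and `u` reduced for `σ s_i`. A commutation move on `u ++ [i]` either takes
place inside `u`, or swaps the last two letters; the latter exists exactly when `u` ends in a
letter `j` far from `i`, and such a `j` is a descent of `σ s_i` iff it is one of `σ`. Counting
the words `v ++ [j, i]` gives `|R(σ s_i s_j)|` for each ordered pair of far descents, and since
`s_i s_j = s_j s_i` every unordered pair is counted twice.
-/

def Far (i j : ℕ) : Prop := 1 < ((i : ℤ) - (j : ℤ)).natAbs

instance : DecidableRel Far := fun _ _ => Nat.decLt _ _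

lemma far_iff {i j : ℕ} : Far i j ↔ i + 1 < j ∨ j + 1 < i := by
  unfold Far; omega

lemma Far.symm {i j : ℕ} (h : Far i j) : Far j i := by
  rw [far_iff] at *; omega

lemma s_apply (i m : ℕ) : s i m = if m = i then i + 1 else if m = i + 1 then i else m := by
  simp [s, Equiv.swap_apply_def]

lemma s_mul_self (i : ℕ) : s i * s i = 1 := Equiv.swap_mul_self _ _

lemma s_apply_s_apply (i m : ℕ) : s i (s i m) = m := Equiv.swap_apply_self _ _ _

lemma s_mul_comm_of_far {i j : ℕ} (h : Far i j) : s i * s j = s j * s i := by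
  rw [far_iff] at h
  ext m
  simp only [Equiv.Perm.mul_apply, s_apply]
  split_ifs <;> omega

section Inversions

variable {σ : Equiv.Perm ℕ} {i : ℕ}

def invSet (σ : Equiv.Perm ℕ) : Set (ℕ × ℕ) := {p | p.1 < p.2 ∧ σ p.2 < σ p.1}

lemma len_eq_ncard_invSet (σ : Equiv.Perm ℕ) : len σ = (invSet σ).ncard :=
  (Nat.card_coe_set_eq _).symm

lemma invSet_one : invSet 1 = ∅ :=
  Set.eq_empty_of_forall_notMem fun _ ⟨h₁, h₂⟩ => lt_asymm h₁ h₂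

lemma len_one : len 1 = 0 := by
  rw [len_eq_ncard_invSet, invSet_one, Set.ncard_empty]

lemma s_apply_lt_s_apply {p : ℕ × ℕ} (h : p.1 < p.2) (hp : p ≠ (i, i + 1)) :
    s i p.1 < s i p.2 ∧ (s i p.1, s i p.2) ≠ (i, i + 1) := by
  obtain ⟨a, b⟩ := p
  simp only [ne_eq, Prod.ext_iff, s_apply] at *
  split_ifs <;> omega

lemma invSet_mul_s_diff (σ : Equiv.Perm ℕ) (i : ℕ) :
    invSet (σ * s i) \ {(i, i + 1)} = Prod.map (s i) (s i) '' (invSet σ \ {(i, i + 1)}) := by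
  ext p
  constructor
  · rintro ⟨⟨hlt, hinv⟩, hne⟩
    obtain ⟨hlt', hne'⟩ := s_apply_lt_s_apply hlt hne
    exact ⟨Prod.map (s i) (s i) p, ⟨⟨hlt', hinv⟩, hne'⟩,
      Prod.ext (s_apply_s_apply _ _) (s_apply_s_apply _ _)⟩
  · rintro ⟨q, ⟨⟨hlt, hinv⟩, hne⟩, rfl⟩
    obtain ⟨hlt', hne'⟩ := s_apply_lt_s_apply hlt hne
    exact ⟨⟨hlt', by simpa [s_apply_s_apply] using hinv⟩, hne'⟩

lemma invSet_mul_s_finite (hfin : (invSet σ).Finite) : (invSet (σ * s i)).Finite := by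
  refine (((hfin.sdiff (t := {(i, i + 1)})).image (Prod.map (s i) (s i))).insert (i, i + 1)).subset
    fun p hp => ?_
  rw [← invSet_mul_s_diff]
  by_cases h : p = (i, i + 1)
  · exact Or.inl h
  · exact Or.inr ⟨hp, h⟩

lemma len_mul_s_add_one (hfin : (invSet σ).Finite) (h : σ (i + 1) < σ i) :
    len (σ * s i) + 1 = len σ := by
  have hi : (i, i + 1) ∈ invSet σ := ⟨by simp, h⟩
  have hi' : (i, i + 1) ∉ invSet (σ * s i) := by
    simp [invSet, s, Equiv.swap_apply_left, Equiv.swap_apply_right, h.le]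
  rw [len_eq_ncard_invSet, len_eq_ncard_invSet, ← Set.sdiff_singleton_eq_self hi',
    invSet_mul_s_diff, Set.ncard_image_of_injective _ (Prod.map_injective.2 ⟨(s i).injective,
    (s i).injective⟩), Set.ncard_sdiff_singleton_add_one hi hfin]

lemma len_mul_s_of_lt (hfin : (invSet σ).Finite) (h : σ i < σ (i + 1)) :
    len (σ * s i) = len σ + 1 := by
  have hdesc : (σ * s i) (i + 1) < (σ * s i) i := by
    simpa [s, Equiv.swap_apply_left, Equiv.swap_apply_right] using h
  simpa [mul_assoc, s_mul_self] using (len_mul_s_add_one (invSet_mul_s_finite hfin) hdesc).symm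

end Inversions

section Words

lemma π_append_singleton (u : List ℕ) (i : ℕ) : π (u ++ [i]) = π u * s i := by
  simp [π]

lemma invSet_π_finite (w : List ℕ) : (invSet (π w)).Finite := by
  induction w using List.reverseRecOn with
  | nil => simp [π, invSet_one]
  | append_singleton u i ih => rw [π_append_singleton]; exact invSet_mul_s_finite ih

lemma len_π_le_length (w : List ℕ) : len (π w) ≤ w.length := by
  induction w using List.reverseRecOn with
  | nil => simp [π, len_one]
  | append_singleton u i ih =>
    rw [π_append_singleton, List.length_append, List.length_singleton]
    rcases lt_or_gt_of_ne ((π u).injective.ne (Nat.succ_ne_self i).symm) with h | h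
    · rw [len_mul_s_of_lt (invSet_π_finite u) h]; omega
    · have := len_mul_s_add_one (invSet_π_finite u) h; omega

lemma reduced_append_singleton_iff {σ : Equiv.Perm ℕ} (hfin : (invSet σ).Finite)
    (u : List ℕ) (i : ℕ) :
    Reduced σ (u ++ [i]) ↔ Reduced (σ * s i) u ∧ σ (i + 1) < σ i := by
  have hπ : π (u ++ [i]) = σ ↔ π u = σ * s i := by
    rw [π_append_singleton]
    constructor
    · rintro rfl
      rw [mul_assoc, s_mul_self, mul_one]
    · rintro h
      rw [h, mul_assoc, s_mul_self, mul_one]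
  simp only [Reduced, hπ, List.length_append, List.length_singleton]
  constructor
  · rintro ⟨hu, hl⟩
    have hle := len_π_le_length u
    rw [hu] at hle
    rcases lt_or_gt_of_ne (σ.injective.ne (Nat.succ_ne_self i).symm) with h | h
    · have := len_mul_s_of_lt hfin h; omega
    · have := len_mul_s_add_one hfin h; exact ⟨⟨hu, by omega⟩, h⟩
  · rintro ⟨⟨hu, hl⟩, h⟩
    have := len_mul_s_add_one hfin h
    exact ⟨hu, by omega⟩

end Words

section Sn

variable {n : ℕ} {σ τ : Equiv.Perm ℕ} {i : ℕ}

lemma mul_mem_Sn (hσ : σ ∈ Sn n) (hτ : τ ∈ Sn n) : σ * τ ∈ Sn n := fun m hm => by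
  rw [Equiv.Perm.mul_apply, hτ m hm, hσ m hm]

lemma s_mem_Sn (h₁ : 1 ≤ i) (h₂ : i < n) : s i ∈ Sn n := fun m hm => by
  rw [s_apply]; split_ifs <;> omega

lemma apply_eq_self_of_lt_apply (hσ : σ ∈ Sn n) {m : ℕ} (h : n < σ m) : σ m = m :=
  σ.injective (hσ _ (Or.inr h))

lemma invSet_finite (hσ : σ ∈ Sn n) : (invSet σ).Finite := by
  refine (Set.finite_Iic (n, n)).subset fun ⟨a, b⟩ ⟨hab, hinv⟩ => ?_
  dsimp only at hab hinv
  have hb : b ≤ n := by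
    by_contra! hb
    rw [hσ b (Or.inr hb)] at hinv
    have := apply_eq_self_of_lt_apply hσ (hb.trans hinv)
    omega
  exact ⟨by dsimp only; omega, hb⟩

lemma mem_Des_iff (hσ : σ ∈ Sn n) : i ∈ Des σ ↔ σ (i + 1) < σ i := by
  refine ⟨And.right, fun h => ⟨Nat.one_le_iff_ne_zero.2 ?_, h⟩⟩
  rintro rfl
  rw [hσ 0 (Or.inl rfl)] at h
  exact Nat.not_lt_zero _ h

lemma lt_of_mem_Des (hσ : σ ∈ Sn n) (hi : i ∈ Des σ) : i < n := by
  by_contra! h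
  have hdesc := hi.2
  rw [hσ (i + 1) (Or.inr (by omega))] at hdesc
  have := apply_eq_self_of_lt_apply hσ (by omega : n < σ i)
  omega

lemma mul_s_mem_Sn (hσ : σ ∈ Sn n) (hi : i ∈ Des σ) : σ * s i ∈ Sn n :=
  mul_mem_Sn hσ (s_mem_Sn hi.1 (lt_of_mem_Des hσ hi))

lemma Des_finite (hσ : σ ∈ Sn n) : (Des σ).Finite :=
  (Set.finite_Iio n).subset fun _ hi => lt_of_mem_Des hσ hi

lemma R_one : R 1 = {[]} := by
  ext w
  constructor
  · rintro ⟨-, h⟩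
    exact List.eq_nil_of_length_eq_zero (h.trans len_one)
  · rintro rfl
    exact ⟨rfl, len_one.symm⟩

lemma R_eq_biUnion (hσ : σ ∈ Sn n) (hne : σ ≠ 1) :
    R σ = ⋃ i ∈ Des σ, (· ++ [i]) '' R (σ * s i) := by
  ext w
  simp only [Set.mem_iUnion, Set.mem_image, exists_prop]
  rcases w.eq_nil_or_concat' with rfl | ⟨u, i, rfl⟩
  · refine ⟨fun hw => (hne hw.1.symm).elim, ?_⟩
    rintro ⟨_, _, _, _, h⟩
    simp at h
  constructor
  · intro hw
    obtain ⟨hu, hd⟩ := (reduced_append_singleton_iff (invSet_finite hσ) u i).1 hw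
    exact ⟨i, (mem_Des_iff hσ).2 hd, u, hu, rfl⟩
  · rintro ⟨j, hj, v, hv, he⟩
    obtain ⟨rfl, rfl⟩ := List.append_singleton_inj.1 he
    exact (reduced_append_singleton_iff (invSet_finite hσ) v j).2 ⟨hv, hj.2⟩

lemma R_finite (hσ : σ ∈ Sn n) : (R σ).Finite := by
  induction h : len σ using Nat.strong_induction_on generalizing σ with
  | _ L ih =>
    by_cases hne : σ = 1
    · rw [hne, R_one]
      exact Set.finite_singleton _
    rw [R_eq_biUnion hσ hne]
    refine (Des_finite hσ).biUnion fun i hi => (ih _ ?_ (mul_s_mem_Sn hσ hi) rfl).image _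
    have := len_mul_s_add_one (invSet_finite hσ) hi.2
    omega

lemma finsum_mem_R_eq_finsum_Des {M : Type*} [AddCommMonoid M] (hσ : σ ∈ Sn n)
    (f : List ℕ → M) (hf : f [] = 0) :
    ∑ᶠ w ∈ R σ, f w = ∑ᶠ i ∈ Des σ, ∑ᶠ u ∈ R (σ * s i), f (u ++ [i]) := by
  by_cases hne : σ = 1
  · subst hne
    simp [R_one, Des, hf]
  have hdisj : (Des σ).PairwiseDisjoint fun i => (· ++ [i]) '' R (σ * s i) := by
    intro i _ j _ hij
    refine Set.disjoint_left.2 ?_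
    rintro _ ⟨u, -, rfl⟩ ⟨v, -, he⟩
    exact hij (List.append_singleton_inj.1 he).2.symm
  rw [R_eq_biUnion hσ hne, finsum_mem_biUnion hdisj (Des_finite hσ)
    fun i hi => (R_finite (mul_s_mem_Sn hσ hi)).image _]
  exact finsum_mem_congr rfl fun i _ => finsum_mem_image (List.append_left_injective [i]).injOn

end Sn

section Commutation

variable {n : ℕ} {σ τ : Equiv.Perm ℕ}

lemma dC_eq_ncard (w : List ℕ) : dC w = {w' | CommMove w w'}.ncard :=
  Nat.card_coe_set_eq _

lemma two_le_length_of_commMove {w w' : List ℕ} (h : CommMove w w') : 2 ≤ w.length := by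
  obtain ⟨u, v, a, b, -, rfl, -⟩ := h
  simp only [List.length_append, List.length_cons]
  omega

lemma dC_nil : dC [] = 0 := by
  have : IsEmpty {w' // CommMove [] w'} :=
    ⟨fun ⟨_, h⟩ => by simpa using two_le_length_of_commMove h⟩
  exact Nat.card_of_isEmpty

lemma finite_setOf_commMove (w : List ℕ) : {w' | CommMove w w'}.Finite :=
  w.permutations.finite_toSet.subset fun _ ⟨u, v, a, b, _, hw, hw'⟩ => by
    subst hw hw'
    exact List.mem_permutations.2 ((List.Perm.swap a b v).append_left u)

lemma commMove_append_singleton_iff {u w' : List ℕ} {i : ℕ} :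
    CommMove (u ++ [i]) w' ↔
      (∃ u', CommMove u u' ∧ w' = u' ++ [i]) ∨
        ∃ v j, u = v ++ [j] ∧ Far j i ∧ w' = v ++ [i, j] := by
  constructor
  · rintro ⟨x, y, a, b, hab, h, rfl⟩
    rcases y.eq_nil_or_concat' with rfl | ⟨y, c, rfl⟩
    · obtain ⟨rfl, rfl⟩ :=
        List.append_singleton_inj.1 (by simpa using h : u ++ [i] = x ++ [a] ++ [b])
      exact Or.inr ⟨x, a, rfl, hab, by simp⟩
    · obtain ⟨rfl, rfl⟩ :=
        List.append_singleton_inj.1 (by simpa using h : u ++ [i] = x ++ a :: b :: y ++ [c])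
      exact Or.inl ⟨x ++ b :: a :: y, ⟨x, y, a, b, hab, rfl, rfl⟩, by simp⟩
  · rintro (⟨u', ⟨x, y, a, b, hab, rfl, rfl⟩, rfl⟩ | ⟨v, j, rfl, hji, rfl⟩)
    · exact ⟨x, y ++ [i], a, b, hab, by simp, by simp⟩
    · exact ⟨v, [], j, i, hji, by simp, by simp⟩

/-- The number of commutation moves of `u ++ [i]` that involve its last letter. -/
def lastFar (i : ℕ) (u : List ℕ) : ℕ :=
  match u.getLast? with
  | some j => if Far j i then 1 else 0
  | none => 0

lemma lastFar_nil (i : ℕ) : lastFar i [] = 0 := rfl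

lemma lastFar_append_singleton (i : ℕ) (v : List ℕ) (j : ℕ) :
    lastFar i (v ++ [j]) = if Far j i then 1 else 0 := by
  simp [lastFar]

lemma dC_append_singleton (u : List ℕ) (i : ℕ) : dC (u ++ [i]) = dC u + lastFar i u := by
  set T := {w' | ∃ v j, u = v ++ [j] ∧ Far j i ∧ w' = v ++ [i, j]}
  have hsplit : {w' | CommMove (u ++ [i]) w'} = (· ++ [i]) '' {u' | CommMove u u'} ∪ T := by
    ext w'
    simp [T, commMove_append_singleton_iff, eq_comm]
  have hdisj : Disjoint ((· ++ [i]) '' {u' | CommMove u u'}) T := by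
    rw [Set.disjoint_left]
    rintro _ ⟨u', -, rfl⟩ ⟨v, j, -, hji, he⟩
    have := (List.append_singleton_inj.1 (by simpa using he : u' ++ [i] = v ++ [i] ++ [j])).2
    rw [far_iff] at hji
    omega
  have hT : T.ncard = lastFar i u := by
    rcases u.eq_nil_or_concat' with rfl | ⟨v, j, rfl⟩
    · simp [T, lastFar]
    · have : T = {w' | Far j i ∧ w' = v ++ [i, j]} := by
        ext w'
        simp [T, List.append_singleton_inj]
      by_cases h : Far j i <;> simp [this, h, lastFar_append_singleton]
  have hTfin : T.Finite :=
    (finite_setOf_commMove (u ++ [i])).subset (hsplit ▸ Set.subset_union_right)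
  rw [dC_eq_ncard, dC_eq_ncard, hsplit,
    Set.ncard_union_eq hdisj ((finite_setOf_commMove u).image _) hTfin,
    Set.ncard_image_of_injective _ (List.append_left_injective [i]), hT]

lemma finsum_lastFar (hτ : τ ∈ Sn n) (i : ℕ) :
    ∑ᶠ u ∈ R τ, lastFar i u =
      ∑ᶠ j ∈ {j ∈ Des τ | Far j i}, Nat.card (R (τ * s j)) := by
  rw [finsum_mem_R_eq_finsum_Des hτ _ (lastFar_nil i),
    ← finsum_mem_inter_add_sdiff {j | Far j i} (Des_finite hτ)]
  have hfar : ∀ j ∈ Des τ ∩ {j | Far j i},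
      ∑ᶠ v ∈ R (τ * s j), lastFar i (v ++ [j]) = Nat.card (R (τ * s j)) := by
    rintro j ⟨-, hj : Far j i⟩
    simp [lastFar_append_singleton, hj, Nat.card_coe_set_eq]
  have hnear : ∀ j ∈ Des τ \ {j | Far j i},
      ∑ᶠ v ∈ R (τ * s j), lastFar i (v ++ [j]) = 0 := by
    rintro j ⟨-, hj : ¬Far j i⟩
    simp [lastFar_append_singleton, hj]
  rw [finsum_mem_congr rfl hfar, finsum_mem_congr rfl hnear, finsum_mem_zero, add_zero]
  rfl

lemma mem_Des_mul_s_iff {i j : ℕ} (h : Far j i) : j ∈ Des (σ * s i) ↔ j ∈ Des σ := by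
  rw [far_iff] at h
  have h₁ : s i j = j := by rw [s_apply]; split_ifs <;> omega
  have h₂ : s i (j + 1) = j + 1 := by rw [s_apply]; split_ifs <;> omega
  simp only [Des, Set.mem_ofPred_eq, Equiv.Perm.mul_apply, h₁, h₂]

end Commutation

lemma finsum_mem_far_eq_two_nsmul {M : Type*} [AddCommMonoid M] {D : Set ℕ} (hD : D.Finite)
    (F : ℕ → ℕ → M) (hF : ∀ i j, Far j i → F i j = F j i) :
    ∑ᶠ i ∈ D, ∑ᶠ j ∈ {j ∈ D | Far j i}, F i j =
      2 • ∑ᶠ p ∈ {p : ℕ × ℕ | p.1 ∈ D ∧ p.2 ∈ D ∧ p.1 + 1 < p.2},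
        F p.1 p.2 := by
  set L := {p : ℕ × ℕ | p.1 ∈ D ∧ p.2 ∈ D ∧ p.1 + 1 < p.2}
  have hL : L.Finite := (hD.prod hD).subset fun p hp => ⟨hp.1, hp.2.1⟩
  have hfibres : D.PairwiseDisjoint fun i => Prod.mk i '' {j ∈ D | Far j i} := by
    intro i _ i' _ hii'
    refine Set.disjoint_left.2 ?_
    rintro _ ⟨j, -, rfl⟩ ⟨j', -, he⟩
    exact hii' (congrArg Prod.fst he).symm
  have hpairs : ⋃ i ∈ D, Prod.mk i '' {j ∈ D | Far j i} = L ∪ Prod.swap '' L := by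
    ext ⟨i, j⟩
    simp only [far_iff, Set.sep_or, Set.mem_iUnion, Set.mem_image, Set.mem_union,
      Set.mem_ofPred_eq, Prod.mk.injEq, exists_eq_right_right, exists_and_left, exists_prop,
      Prod.exists, Prod.swap_prod_mk, ↓existsAndEq, true_and, exists_eq_right, L]
    tauto
  have hdisj : Disjoint L (Prod.swap '' L) := by
    rw [Set.disjoint_left]
    rintro _ ⟨-, -, hp⟩ ⟨q, ⟨-, -, hq⟩, rfl⟩
    rw [Prod.fst_swap, Prod.snd_swap] at hp
    omega
  calc ∑ᶠ i ∈ D, ∑ᶠ j ∈ {j ∈ D | Far j i}, F i j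
      = ∑ᶠ p ∈ ⋃ i ∈ D, Prod.mk i '' {j ∈ D | Far j i}, F p.1 p.2 := by
        rw [finsum_mem_biUnion hfibres hD fun i _ => (hD.subset (Set.sep_subset _ _)).image _]
        exact finsum_mem_congr rfl fun i _ =>
          (finsum_mem_image (f := fun p : ℕ × ℕ => F p.1 p.2)
            (Prod.mk_right_injective i).injOn).symm
    _ = ∑ᶠ p ∈ L, F p.1 p.2 + ∑ᶠ p ∈ Prod.swap '' L, F p.1 p.2 := by
        rw [hpairs, finsum_mem_union hdisj hL (hL.image _)]
    _ = 2 • ∑ᶠ p ∈ L, F p.1 p.2 := by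
        rw [finsum_mem_image Prod.swap_injective.injOn, two_nsmul]
        congr 1
        exact finsum_mem_congr rfl fun p hp => hF _ _ (far_iff.2 (Or.inl hp.2.2))

/-- recursion for the total commutation degree:
`Σ_{w ∈ R σ} d_C^{G(σ)}(w) = Σ_{i ∈ Des σ} Σ_{u ∈ R(σ s_i)} d_C^{G(σ s_i)}(u)
+ 2 Σ_{{i,j} ⊆ Des σ, j - i > 1} |R(σ s_i s_j)|`, the last sum over unordered pairs
of descents differing by more than 1 (represented by ordered pairs `i < j`). -/
theorem statement_5 (n : ℕ) (σ : Equiv.Perm ℕ) (hσ : σ ∈ Sn n) :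
    ∑ᶠ w ∈ R σ, dC w =
      (∑ᶠ i ∈ Des σ, ∑ᶠ u ∈ R (σ * s i), dC u) +
      2 * ∑ᶠ p ∈ {p : ℕ × ℕ | p.1 ∈ Des σ ∧ p.2 ∈ Des σ ∧ p.1 + 1 < p.2},
            Nat.card (R (σ * s p.1 * s p.2)) := by
  calc ∑ᶠ w ∈ R σ, dC w
      = ∑ᶠ i ∈ Des σ, ∑ᶠ u ∈ R (σ * s i), (dC u + lastFar i u) := by
        simp_rw [finsum_mem_R_eq_finsum_Des hσ dC dC_nil, dC_append_singleton]
    _ = (∑ᶠ i ∈ Des σ, ∑ᶠ u ∈ R (σ * s i), dC u) +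
          ∑ᶠ i ∈ Des σ, ∑ᶠ j ∈ {j ∈ Des σ | Far j i},
            Nat.card (R (σ * s i * s j)) := by
        rw [← finsum_mem_add_distrib (Des_finite hσ)]
        refine finsum_mem_congr rfl fun i hi => ?_
        rw [finsum_mem_add_distrib (R_finite (mul_s_mem_Sn hσ hi)),
          finsum_lastFar (mul_s_mem_Sn hσ hi)]
        refine congrArg _ (finsum_mem_congr (Set.ext fun j => ?_) fun _ _ => rfl)
        exact and_congr_left mem_Des_mul_s_iff
    _ = _ := by
        rw [finsum_mem_far_eq_two_nsmul (Des_finite hσ) _ fun i j h => by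
          rw [mul_assoc, mul_assoc, s_mul_comm_of_far h.symm], smul_eq_mul]

end RW
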